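/- Let G = (N, Σ, P, S) be an LS2NF, let A, B ∈ N and let w, v be sentences. If (A, w) ⇝ (B, v), then (B, v) is a sub-derivation of (A, w). -/

import Mathlib

/-- A positioned token: a terminal together with a line and column number. -/
structure Token (T : Type) where
  tm : T
  line : ℕ
  col : ℕ

/-- A sentence is a finite sequence of positioned tokens. -/
abbrev Sentence (T : Type) := List (Token T)

/-- The right-hand side (clause) of an LS2NF production rule. -/
inductive Clause (T N : Type) where
  | eps : Clause T N
  | atom : T → Clause T N
  | unary : N → (Sentence T → Prop) → Clause T N
  | binary : N → N → (Sentence T → Sentence T → Prop) → Clause T N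

/-- A layout-sensitive grammar in binary normal form (LS2NF).
Layout constraints hold on empty sentences by convention. -/
structure LS2NF (T N : Type) where
  P : Set (N × Clause T N)
  S : N
  finite : P.Finite
  unary_eps : ∀ A B φ, (A, Clause.unary B φ) ∈ P → φ []
  binary_eps_left : ∀ A B₁ B₂ φ, (A, Clause.binary B₁ B₂ φ) ∈ P → ∀ w, φ [] w
  binary_eps_right : ∀ A B₁ B₂ φ, (A, Clause.binary B₁ B₂ φ) ∈ P → ∀ w, φ w []

/-- Parse trees. -/
inductive ParseTree (T N : Type) where
  | eps : N → ParseTree T N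
  | leaf : N → Token T → ParseTree T N
  | unary : N → ParseTree T N → ParseTree T N
  | binary : N → ParseTree T N → ParseTree T N → ParseTree T N

namespace ParseTree

variable {T N : Type}

/-- Root nonterminal of a parse tree. -/
def root : ParseTree T N → N
  | .eps A => A
  | .leaf A _ => A
  | .unary A _ => A
  | .binary A _ _ => A

/-- The sentence at the token leaves of a parse tree, left to right. -/
def word : ParseTree T N → Sentence T
  | .eps _ => []
  | .leaf _ tok => [tok]
  | .unary _ t => t.word
  | .binary _ t₁ t₂ => t₁.word ++ t₂.word

/-- Validity of a parse tree w.r.t. a grammar. -/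
inductive Valid (G : LS2NF T N) : ParseTree T N → Prop
  | eps {A} : (A, Clause.eps) ∈ G.P → Valid G (.eps A)
  | leaf {A} {tok : Token T} : (A, Clause.atom tok.tm) ∈ G.P → Valid G (.leaf A tok)
  | unary {A t φ} : (A, Clause.unary (root t) φ) ∈ G.P → φ (word t) → Valid G t →
      Valid G (.unary A t)
  | binary {A t₁ t₂ φ} : (A, Clause.binary (root t₁) (root t₂) φ) ∈ G.P →
      φ (word t₁) (word t₂) → Valid G t₁ → Valid G t₂ → Valid G (.binary A t₁ t₂)

end ParseTree

variable {T N : Type}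

/-- `t` witnesses the derivation `A ⇒ w`. -/
def Witness (G : LS2NF T N) (t : ParseTree T N) (A : N) (w : Sentence T) : Prop :=
  t.Valid G ∧ t.root = A ∧ t.word = w

/-- `A ⇒ w`: some parse tree witnesses it. -/
def Derives (G : LS2NF T N) (A : N) (w : Sentence T) : Prop :=
  ∃ t, Witness G t A w

/-- `A` is nullable: `A ⇒ ε`. -/
def Nullable (G : LS2NF T N) (A : N) : Prop := Derives G A []

/-- The derivation `A ⇒ w` is ambiguous: two distinct witnessing parse trees exist. -/
def Ambiguous (G : LS2NF T N) (A : N) (w : Sentence T) : Prop :=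
  ∃ t₁ t₂, t₁ ≠ t₂ ∧ Witness G t₁ A w ∧ Witness G t₂ A w

/-- Subtree relation on parse trees. -/
inductive IsSubtree : ParseTree T N → ParseTree T N → Prop
  | refl (t) : IsSubtree t t
  | unary {s t} (A) : IsSubtree s t → IsSubtree s (.unary A t)
  | left {s t₁} (A) (t₂) : IsSubtree s t₁ → IsSubtree s (.binary A t₁ t₂)
  | right {s t₂} (A) (t₁) : IsSubtree s t₂ → IsSubtree s (.binary A t₁ t₂)

/-- One-step reachability `↪` on signatures. -/
inductive StepReach (G : LS2NF T N) : N × Sentence T → N × Sentence T → Prop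
  | unary {A B φ w} : (A, Clause.unary B φ) ∈ G.P → φ w → StepReach G (A, w) (B, w)
  | left {A B B' φ w₁ w₂} : (A, Clause.binary B B' φ) ∈ G.P → φ w₁ w₂ → Derives G B' w₂ →
      StepReach G (A, w₁ ++ w₂) (B, w₁)
  | right {A B B' φ w₁ w₂} : (A, Clause.binary B' B φ) ∈ G.P → φ w₁ w₂ → Derives G B' w₁ →
      StepReach G (A, w₁ ++ w₂) (B, w₂)

/-- Reachability `⇝`: reflexive transitive closure of `↪`. -/
def Reach (G : LS2NF T N) : N × Sentence T → N × Sentence T → Prop :=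
  Relation.ReflTransGen (StepReach G)

/-- `(B, v)` is a sub-derivation of `(A, w)`. -/
def SubDerivation (G : LS2NF T N) (B : N) (v : Sentence T) (A : N) (w : Sentence T) : Prop :=
  ∀ t, Witness G t B v → ∃ T', Witness G T' A w ∧ IsSubtree t T'

/-- Similarity relation `∼` on parse trees. -/
inductive SimilarPT : ParseTree T N → ParseTree T N → Prop
  | eps (A : N) : SimilarPT (.eps A) (.eps A)
  | leaf (A : N) (tok : Token T) : SimilarPT (.leaf A tok) (.leaf A tok)
  | unary {t₁ t₂ : ParseTree T N} (A : N) : t₁.root = t₂.root → t₁.word = t₂.word →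
      SimilarPT (.unary A t₁) (.unary A t₂)
  | binary {t₁₁ t₁₂ t₂₁ t₂₂ : ParseTree T N} (A : N) :
      t₁₁.root = t₂₁.root → t₁₁.word = t₂₁.word →
      t₁₂.root = t₂₂.root → t₁₂.word = t₂₂.word →
      SimilarPT (.binary A t₁₁ t₁₂) (.binary A t₂₁ t₂₂)

/-- A signature `(A, w)` is locally ambiguous. -/
def LocalAmb (G : LS2NF T N) (A : N) (w : Sentence T) : Prop :=
  ∃ H h t₁ t₂, Reach G (A, w) (H, h) ∧ ¬ SimilarPT t₁ t₂ ∧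
    Witness G t₁ H h ∧ Witness G t₂ H h

/-- Edge of the graph representation of an LS2NF. -/
def Edge (G : LS2NF T N) (A B : N) : Prop :=
  (∃ φ, (A, Clause.unary B φ) ∈ G.P) ∨
  (∃ B' φ, (A, Clause.binary B B' φ) ∈ G.P ∧ Nullable G B') ∨
  (∃ B' φ, (A, Clause.binary B' B φ) ∈ G.P ∧ Nullable G B')

/-- An LS2NF is acyclic if its graph representation has no directed cycle. -/
def Acyclic (G : LS2NF T N) : Prop := ∀ A, ¬ Relation.TransGen (Edge G) A A

/-- A model for the SMT encoding with bound `k`: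
a sentence of length `k` plus Boolean values for the variables `D`, `Rε` and `R`. -/
structure Model (T N : Type) (k : ℕ) where
  word : Sentence T
  len_eq : word.length = k
  D : N → ℕ → ℕ → Bool
  Re : N → Bool
  R : N → ℕ → ℕ → Bool

namespace Model

variable {k : ℕ}

/-- `w^m_{x,δ}`: the length-`δ` contiguous subword of `w^m` starting at index `x`. -/
def sub (m : Model T N k) (x δ : ℕ) : Sentence T := (m.word.drop x).take δ

/-- `tm_x`: the terminal of the `x`-th token of `w^m` (if any). -/
def tmAt (m : Model T N k) (x : ℕ) : Option T := (m.word[x]?).map Token.tm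

end Model

/-- `m ⊨ Φ_D^k`. -/
def SatPhiD (G : LS2NF T N) {k : ℕ} (m : Model T N k) : Prop :=
  ∀ A x δ, 0 < δ → x + δ ≤ k →
    (m.D A x δ = true ↔
      (∃ a, (A, Clause.atom a) ∈ G.P ∧ δ = 1 ∧ m.tmAt x = some a) ∨
      (∃ B φ, (A, Clause.unary B φ) ∈ G.P ∧ m.D B x δ = true ∧ φ (m.sub x δ)) ∨
      (∃ B₁ B₂ φ, (A, Clause.binary B₁ B₂ φ) ∈ G.P ∧
        ((Nullable G B₁ ∧ m.D B₂ x δ = true) ∨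
         (Nullable G B₂ ∧ m.D B₁ x δ = true) ∨
         (∃ δ', 0 < δ' ∧ δ' < δ ∧ m.D B₁ x δ' = true ∧
            m.D B₂ (x + δ') (δ - δ') = true ∧
            φ (m.sub x δ') (m.sub (x + δ') (δ - δ'))))))

/-- `m ⊨ Φ_Rε^k`. -/
def SatPhiRe (G : LS2NF T N) {k : ℕ} (m : Model T N k) : Prop :=
  ∀ B, (m.Re B = true ↔
    (B = G.S ∧ k = 0) ∨
    (∃ A φ, (A, Clause.unary B φ) ∈ G.P ∧ m.Re A = true) ∨
    (∃ A B' φ, ((A, Clause.binary B B' φ) ∈ G.P ∨ (A, Clause.binary B' B φ) ∈ G.P) ∧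
      ((m.Re A = true ∧ Nullable G B') ∨
       (∃ x δ, 0 < δ ∧ x + δ ≤ k ∧ m.R A x δ = true ∧ m.D B' x δ = true))))

/-- `m ⊨ Φ_R^k`. -/
def SatPhiR (G : LS2NF T N) {k : ℕ} (m : Model T N k) : Prop :=
  ∀ B x δ, 0 < δ → x + δ ≤ k →
    (m.R B x δ = true ↔
      (B = G.S ∧ x = 0 ∧ δ = k) ∨
      (∃ A φ, (A, Clause.unary B φ) ∈ G.P ∧ m.R A x δ = true ∧ φ (m.sub x δ)) ∨
      (∃ A B' φ δ', (A, Clause.binary B B' φ) ∈ G.P ∧ x + δ + δ' ≤ k ∧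
        m.R A x (δ + δ') = true ∧
        (if δ' = 0 then Nullable G B' else m.D B' (x + δ) δ' = true) ∧
        φ (m.sub x δ) (m.sub (x + δ) δ')) ∨
      (∃ A B' φ δ', (A, Clause.binary B' B φ) ∈ G.P ∧ δ' ≤ x ∧
        m.R A (x - δ') (δ' + δ) = true ∧
        (if δ' = 0 then Nullable G B' else m.D B' (x - δ') δ' = true) ∧
        φ (m.sub (x - δ') δ') (m.sub x δ)))

/-- Using clauses `γ`. -/
inductive UClause (T N : Type) where
  | eps : UClause T N
  | atom : T → UClause T N
  | unary : N → (Sentence T → Prop) → UClause T N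
  | binary : N → ℕ → (Sentence T → Sentence T → Prop) → N → UClause T N

/-- Membership in the using-clause set `Γ(A, δ)`. -/
def InGamma (G : LS2NF T N) (A : N) (δ : ℕ) : UClause T N → Prop
  | .eps => (A, Clause.eps) ∈ G.P
  | .atom a => (A, Clause.atom a) ∈ G.P
  | .unary B φ => (A, Clause.unary B φ) ∈ G.P
  | .binary B₁ δ' φ B₂ => (A, Clause.binary B₁ B₂ φ) ∈ G.P ∧ δ' ≤ δ

/-- Semantics `⟦γ⟧_{x,δ}` of a using clause under a model. -/
def USem (G : LS2NF T N) {k : ℕ} (m : Model T N k) (x δ : ℕ) : UClause T N → Prop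
  | .eps => δ = 0
  | .atom a => δ = 1 ∧ m.tmAt x = some a
  | .unary B φ => if δ = 0 then Nullable G B else (m.D B x δ = true ∧ φ (m.sub x δ))
  | .binary B₁ δ' φ B₂ =>
      φ (m.sub x δ') (m.sub (x + δ') (δ - δ')) ∧
      (if δ' = 0 then Nullable G B₁ else m.D B₁ x δ' = true) ∧
      (if δ' = δ then Nullable G B₂ else m.D B₂ (x + δ') (δ - δ') = true)

/-- `Φ_multi(A, x, δ)` holds under `m`. -/
def PhiMulti (G : LS2NF T N) {k : ℕ} (m : Model T N k) (A : N) (x δ : ℕ) : Prop :=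
  ∃ γ₁ γ₂ : UClause T N, γ₁ ≠ γ₂ ∧ InGamma G A δ γ₁ ∧ InGamma G A δ γ₂ ∧
    USem G m x δ γ₁ ∧ USem G m x δ γ₂

/-- `m ⊨ Φ_amb^k`. -/
def SatPhiAmb (G : LS2NF T N) {k : ℕ} (m : Model T N k) : Prop :=
  SatPhiD G m ∧ SatPhiRe G m ∧ SatPhiR G m ∧
  ∃ H : N, (m.Re H = true ∧ PhiMulti G m H 0 0) ∨
    (∃ x δ, 0 < δ ∧ x + δ ≤ k ∧ m.R H x δ = true ∧ PhiMulti G m H x δ)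

/-- `G'` is a refinement of `G` (same nonterminals, terminals and start symbol). -/
def Refinement (G G' : LS2NF T N) : Prop :=
  G'.S = G.S ∧
  ∀ r ∈ G'.P, r ∈ G.P ∨
    (∃ A B φ, r = (A, Clause.unary B φ) ∧
      (A, Clause.unary B (fun _ => True)) ∈ G.P) ∨
    (∃ A B C φ, r = (A, Clause.binary B C φ) ∧
      (A, Clause.binary B C (fun _ _ => True)) ∈ G.P)

theorem IsSubtree.trans {r s t : ParseTree T N} (hrs : IsSubtree r s) (hst : IsSubtree s t) :
    IsSubtree r t := by
  induction hst with
  | refl => exact hrs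
  | unary A _ ih => exact .unary A ih
  | left A t₂ _ ih => exact .left A t₂ ih
  | right A t₁ _ ih => exact .right A t₁ ih

namespace SubDerivation

variable {G : LS2NF T N}

theorem refl (A : N) (w : Sentence T) : SubDerivation G A w A w :=
  fun t ht => ⟨t, ht, .refl t⟩

theorem trans {A B C : N} {u v w : Sentence T} (hCB : SubDerivation G C u B v)
    (hBA : SubDerivation G B v A w) : SubDerivation G C u A w := by
  intro t ht
  obtain ⟨t', ht', hsub⟩ := hCB t ht
  obtain ⟨t'', ht'', hsub'⟩ := hBA t' ht'
  exact ⟨t'', ht'', hsub.trans hsub'⟩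

end SubDerivation

theorem StepReach.subDerivation {G : LS2NF T N} {p q : N × Sentence T}
    (hpq : StepReach G p q) : SubDerivation G q.1 q.2 p.1 p.2 := by
  cases hpq with
  | @unary A B φ w hP hφ =>
    rintro t ⟨hv, rfl, rfl⟩
    exact ⟨.unary A t, ⟨.unary hP hφ hv, rfl, rfl⟩, .unary A (.refl t)⟩
  | @left A B B' φ w₁ w₂ hP hφ hd =>
    rintro t ⟨hv, rfl, rfl⟩
    obtain ⟨t₂, hv₂, rfl, rfl⟩ := hd
    exact ⟨.binary A t t₂, ⟨.binary hP hφ hv hv₂, rfl, rfl⟩, .left A t₂ (.refl t)⟩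
  | @right A B B' φ w₁ w₂ hP hφ hd =>
    rintro t ⟨hv, rfl, rfl⟩
    obtain ⟨t₁, hv₁, rfl, rfl⟩ := hd
    exact ⟨.binary A t₁ t, ⟨.binary hP hφ hv₁ hv, rfl, rfl⟩, .right A t₁ (.refl t)⟩

theorem Reach.subDerivation {G : LS2NF T N} {p q : N × Sentence T} (hpq : Reach G p q) :
    SubDerivation G q.1 q.2 p.1 p.2 := by
  induction hpq with
  | refl => exact .refl _ _
  | tail _ hstep ih => exact hstep.subDerivation.trans ih

theorem stmt1_general {T N : Type}
    (G : LS2NF T N) (A B : N) (w v : Sentence T)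
    (h : Reach G (A, w) (B, v)) :
    SubDerivation G B v A w := h.subDerivation

/-- If `(A, w) ⇝ (B, v)`, then `(B, v)` is a sub-derivation of `(A, w)`. -/
theorem stmt1 {T N : Type} [Finite T] [Finite N] [Nonempty N]
    (G : LS2NF T N) (A B : N) (w v : Sentence T)
    (h : Reach G (A, w) (B, v)) :
    SubDerivation G B v A w :=
  stmt1_general G A B w v h
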